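/- Every generic closed regular curve in ℝ² that is not a simple closed curve (i.e. has at least one crossing) has a shell: there exist crossing parameters a < b such that the restriction of γ to [a,b] traces a simple closed curve (a 1-gon of γ). -/

import Mathlib

open Set

noncomputable section

/-- The 2×2 determinant of two plane vectors. -/
def det2 (v w : ℝ × ℝ) : ℝ := v.1 * w.2 - v.2 * w.1

/-- Rotation of a plane vector by +π/2 (the leftward normal direction). -/
def leftNormal (v : ℝ × ℝ) : ℝ × ℝ := (-v.2, v.1)

/-- A closed regular planar curve: a smooth 1-periodic map `ℝ → ℝ²`
with nowhere vanishing derivative. -/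
structure PlanarCurve where
  toFun : ℝ → ℝ × ℝ
  smooth : ContDiff ℝ (⊤ : ℕ∞) toFun
  periodic : Function.Periodic toFun 1
  regular : ∀ t : ℝ, deriv toFun t ≠ 0

/-- `det(γ̇(t), γ̈(t))`; its zeros are the inflection points of `γ`. -/
def curvDet (γ : PlanarCurve) (t : ℝ) : ℝ :=
  det2 (deriv γ.toFun t) (deriv (deriv γ.toFun) t)

/-- The signed curvature `κ_γ(t) = det(γ̇(t), γ̈(t))/|γ̇(t)|³`. -/
def curvature (γ : PlanarCurve) (t : ℝ) : ℝ :=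
  curvDet γ t / ‖deriv γ.toFun t‖ ^ 3

/-- `t` is a parameter mapping to a self-intersection point of `γ`. -/
def IsCrossingParam (γ : PlanarCurve) (t : ℝ) : Prop :=
  ∃ s : ℝ, γ.toFun s = γ.toFun t ∧ ∀ k : ℤ, s ≠ t + k

/-- The set of self-intersection (crossing) points of `γ` in the plane. -/
def crossingSet (γ : PlanarCurve) : Set (ℝ × ℝ) :=
  {p | ∃ t : ℝ, γ.toFun t = p ∧ IsCrossingParam γ t}

/-- `#_γ`, the number of crossings of `γ`. -/
def crossingCount (γ : PlanarCurve) : ℕ := (crossingSet γ).ncard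

/-- The inflection parameters of `γ` in one period. -/
def inflectionSet (γ : PlanarCurve) : Set ℝ :=
  {t ∈ Ico (0 : ℝ) 1 | curvDet γ t = 0}

/-- `i_γ`, the number of inflection points of `γ` in one period. -/
def inflectionCount (γ : PlanarCurve) : ℕ := (inflectionSet γ).ncard

/-- Genericity: the self-intersections form a finite set of transversal double
points, and all the zeros of the curvature are nondegenerate. -/
def IsGeneric (γ : PlanarCurve) : Prop :=
  (crossingSet γ).Finite ∧
  (∀ t s : ℝ, γ.toFun s = γ.toFun t → (∀ k : ℤ, s ≠ t + k) →
      det2 (deriv γ.toFun t) (deriv γ.toFun s) ≠ 0 ∧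
      ∀ u : ℝ, γ.toFun u = γ.toFun t →
        (∃ k : ℤ, u = t + k) ∨ (∃ k : ℤ, u = s + k)) ∧
  (∀ t : ℝ, curvDet γ t = 0 → deriv (curvDet γ) t ≠ 0)

/-- The Jacobian determinant of a map `φ : ℝ² → ℝ²`. -/
def jacDet (φ : ℝ × ℝ → ℝ × ℝ) (p : ℝ × ℝ) : ℝ :=
  det2 (fderiv ℝ φ p (1, 0)) (fderiv ℝ φ p (0, 1))

/-- Two curves are geotopic (have the same topological type) if an
orientation-preserving diffeomorphism of the plane maps the image of one
onto the image of the other. -/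
def Geotopic (γ₁ γ₂ : PlanarCurve) : Prop :=
  ∃ φ ψ : ℝ × ℝ → ℝ × ℝ,
    ContDiff ℝ (⊤ : ℕ∞) φ ∧ ContDiff ℝ (⊤ : ℕ∞) ψ ∧
    (∀ p, ψ (φ p) = p) ∧ (∀ p, φ (ψ p) = p) ∧
    (∀ p, 0 < jacDet φ p) ∧
    φ '' (Set.range γ₁.toFun) = Set.range γ₂.toFun

/-- `I(γ)`: the minimal number of inflection points among generic curves
geotopic to `γ`. -/
def I (γ : PlanarCurve) : ℕ :=
  sInf {k : ℕ | ∃ σ : PlanarCurve, IsGeneric σ ∧ Geotopic γ σ ∧ inflectionCount σ = k}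

/-- `γ` has rotation index `m`: the continuous angle function of the unit
tangent vector increases by `2πm` over one period. -/
def HasRotationIndex (γ : PlanarCurve) (m : ℤ) : Prop :=
  ∃ θ : ℝ → ℝ, Continuous θ ∧
    (∀ t : ℝ, deriv γ.toFun t = ‖deriv γ.toFun t‖ • (Real.cos (θ t), Real.sin (θ t))) ∧
    θ 1 = θ 0 + 2 * Real.pi * m

/-- An (admissible-to-be) `n`-gon of `γ`: a disjoint union of `n` proper
closed arcs of `S¹ = ℝ/ℤ` with endpoints at crossing parameters, whose image
is a (piecewise smooth) simple closed curve, together with its interior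
domain `D` and the orientation data putting `D` on the left. -/
structure PlanarPolygon (γ : PlanarCurve) where
  /-- the number of arcs -/
  n : ℕ
  npos : 0 < n
  /-- left endpoints of the arcs -/
  a : Fin n → ℝ
  /-- right endpoints of the arcs -/
  b : Fin n → ℝ
  lt : ∀ i, a i < b i
  /-- the arcs are pairwise disjoint and cyclically ordered within one period -/
  ordered : ∀ i : Fin n,
    (∀ h : (i : ℕ) + 1 < n, b i < a ⟨(i : ℕ) + 1, h⟩) ∧
    ((i : ℕ) + 1 = n → b i < a ⟨0, npos⟩ + 1)
  crossing_a : ∀ i, IsCrossingParam γ (a i)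
  crossing_b : ∀ i, IsCrossingParam γ (b i)
  /-- the image `γ(J)` is a simple closed curve -/
  jordan : Nonempty ((γ.toFun '' (⋃ i, Icc (a i) (b i))) ≃ₜ Circle)
  /-- the interior domain -/
  D : Set (ℝ × ℝ)
  D_open : IsOpen D
  D_bounded : Bornology.IsBounded D
  D_conn : IsConnected D
  D_simplyConnected : SimplyConnectedSpace ↥D
  D_frontier : frontier D = γ.toFun '' (⋃ i, Icc (a i) (b i))
  /-- the sign `ε_J` on each arc -/
  eps : Fin n → ℤ
  eps_pm : ∀ i, eps i = 1 ∨ eps i = -1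
  /-- traversing arc `i` in the direction given by `eps i`, the interior
  domain `D` lies on the left -/
  eps_left : ∀ i, ∀ t ∈ Ioo (a i) (b i), ∃ δ > 0, ∀ s ∈ Ioo (0 : ℝ) δ,
      γ.toFun t + s • leftNormal ((eps i : ℝ) • deriv γ.toFun t) ∈ D
  /-- the combinatorial successor: arc `next i` starts at the vertex where
  arc `i` ends -/
  next : Equiv.Perm (Fin n)
  next_match : ∀ i, γ.toFun (if eps i = 1 then b i else a i)
      = γ.toFun (if eps (next i) = 1 then a (next i) else b (next i))

namespace PlanarPolygon

variable {γ : PlanarCurve}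

/-- The incoming unit-scale tangent direction at the end vertex of arc `i`. -/
def incoming (J : PlanarPolygon γ) (i : Fin J.n) : ℝ × ℝ :=
  (J.eps i : ℝ) • deriv γ.toFun (if J.eps i = 1 then J.b i else J.a i)

/-- The outgoing tangent direction at the start vertex of arc `i`. -/
def outgoing (J : PlanarPolygon γ) (i : Fin J.n) : ℝ × ℝ :=
  (J.eps i : ℝ) • deriv γ.toFun (if J.eps i = 1 then J.a i else J.b i)

/-- The interior angle at the vertex following arc `i` is less than `π`
(all vertices are transversal crossings, so angles are never `0` or `π`). -/
def AngleLtPi (J : PlanarPolygon γ) (i : Fin J.n) : Prop :=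
  0 < det2 (J.incoming i) (J.outgoing (J.next i))

/-- Admissibility: at most two of the interior angles are less than `π`. -/
def Admissible (J : PlanarPolygon γ) : Prop :=
  {i : Fin J.n | J.AngleLtPi i}.ncard ≤ 2

/-- A positive polygon: every arc is traversed in the direction of `γ`. -/
def Positive (J : PlanarPolygon γ) : Prop := ∀ i, J.eps i = 1

/-- A negative polygon: every arc is traversed against the direction of `γ`. -/
def Negative (J : PlanarPolygon γ) : Prop := ∀ i, J.eps i = -1

end PlanarPolygon

/-- A shell (1-gon) of `γ` with arc `[x, y]` and sign `sgn`. -/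
def IsShell (γ : PlanarCurve) (x y : ℝ) (sgn : ℤ) : Prop :=
  ∃ J : PlanarPolygon γ, J.n = 1 ∧ ∀ i : Fin J.n, J.a i = x ∧ J.b i = y ∧ J.eps i = sgn

/-- An admissible function for `γ`: a `{0, ±1}`-valued 1-periodic function on
`S¹_γ` (vanishing at the crossing parameters) with finite support, such that
every admissible polygon `J` contains a support point `t` with `Φ t = ε_J t`. -/
def IsAdmissibleFun (γ : PlanarCurve) (Φ : ℝ → ℤ) : Prop :=
  Function.Periodic Φ 1 ∧
  (∀ t, Φ t = 0 ∨ Φ t = 1 ∨ Φ t = -1) ∧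
  (∀ t, IsCrossingParam γ t → Φ t = 0) ∧
  {t ∈ Ico (0 : ℝ) 1 | Φ t ≠ 0}.Finite ∧
  ∀ J : PlanarPolygon γ, J.Admissible →
    ∃ i : Fin J.n, ∃ t ∈ Ioo (J.a i) (J.b i), Φ t = J.eps i

/-- The support of `Φ` within one period. -/
def suppIn (Φ : ℝ → ℤ) : Set ℝ := {t ∈ Ico (0 : ℝ) 1 | Φ t ≠ 0}

/-- The cyclic successor of `x` in a (finite) set `S ⊆ [0,1)`. -/
def nextPt (S : Set ℝ) (x : ℝ) : ℝ := by
  classical exact if (∃ y ∈ S, x < y) then sInf {y ∈ S | x < y} else sInf S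

/-- `μ(Φ)`: the number of cyclic sign changes of the nonzero values of `Φ`. -/
def muFun (Φ : ℝ → ℤ) : ℕ :=
  {t ∈ suppIn Φ | Φ t ≠ Φ (nextPt (suppIn Φ) t)}.ncard

/-- The invariant `μ(γ)`: the minimum of `μ(Φ)` over admissible functions. -/
def mu (γ : PlanarCurve) : ℕ :=
  sInf {k : ℕ | ∃ Φ : ℝ → ℤ, IsAdmissibleFun γ Φ ∧ muFun Φ = k}

/-! ### Double tangents -/

/-- The line through `p` with direction `v`. -/
def lineThrough (p v : ℝ × ℝ) : Set (ℝ × ℝ) := {q | det2 v (q - p) = 0}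

/-- The points of the line through `p` with direction `v` at which the line is
tangent to `γ`. -/
def tangentPts (γ : PlanarCurve) (p v : ℝ × ℝ) : Set (ℝ × ℝ) :=
  {q | det2 v (q - p) = 0 ∧ ∃ t : ℝ, γ.toFun t = q ∧ det2 v (deriv γ.toFun t) = 0}

/-- `L` is a double tangent of `γ`: a line tangent to `γ` at exactly two
points of its image. -/
def IsDoubleTangent (γ : PlanarCurve) (L : Set (ℝ × ℝ)) : Prop :=
  ∃ p v : ℝ × ℝ, v ≠ 0 ∧ L = lineThrough p v ∧ (tangentPts γ p v).ncard = 2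

/-- Near the parameter `t`, the curve lies (weakly) on the `σ`-side of the
line through `p` with direction `v`. -/
def LocallyOnSide (γ : PlanarCurve) (p v : ℝ × ℝ) (t : ℝ) (σ : ℝ) : Prop :=
  ∃ δ > 0, ∀ s : ℝ, |s - t| < δ → 0 ≤ σ * det2 v (γ.toFun s - p)

/-- A same-side double tangent: near both tangency points the curve lies on
the same side of the line. -/
def IsSameSideDT (γ : PlanarCurve) (L : Set (ℝ × ℝ)) : Prop :=
  ∃ p v : ℝ × ℝ, v ≠ 0 ∧ L = lineThrough p v ∧ (tangentPts γ p v).ncard = 2 ∧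
    ∃ σ : ℝ, (σ = 1 ∨ σ = -1) ∧
      ∀ t : ℝ, γ.toFun t ∈ tangentPts γ p v → det2 v (deriv γ.toFun t) = 0 →
        LocallyOnSide γ p v t σ

/-- An opposite-side double tangent: near the two tangency points the curve
lies on opposite sides of the line. -/
def IsOppSideDT (γ : PlanarCurve) (L : Set (ℝ × ℝ)) : Prop :=
  ∃ p v : ℝ × ℝ, v ≠ 0 ∧ L = lineThrough p v ∧ (tangentPts γ p v).ncard = 2 ∧
    ∃ t₁ t₂ : ℝ, γ.toFun t₁ ≠ γ.toFun t₂ ∧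
      γ.toFun t₁ ∈ tangentPts γ p v ∧ γ.toFun t₂ ∈ tangentPts γ p v ∧
      det2 v (deriv γ.toFun t₁) = 0 ∧ det2 v (deriv γ.toFun t₂) = 0 ∧
      LocallyOnSide γ p v t₁ 1 ∧ LocallyOnSide γ p v t₂ (-1)

/-- `d₁(γ)`: the number of same-side double tangents. -/
def d1 (γ : PlanarCurve) : ℕ := {L : Set (ℝ × ℝ) | IsSameSideDT γ L}.ncard

/-- `d₂(γ)`: the number of opposite-side double tangents. -/
def d2 (γ : PlanarCurve) : ℕ := {L : Set (ℝ × ℝ) | IsOppSideDT γ L}.ncard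

/-- `d(γ) = d₁(γ) + d₂(γ)`: the number of double tangents. -/
def dTot (γ : PlanarCurve) : ℕ := d1 γ + d2 γ

/-- Genericity of the tangent lines: finitely many double tangents, no line
tangent at three or more points, and no double tangent touching `γ` at an
inflection point. -/
def HasGenericTangents (γ : PlanarCurve) : Prop :=
  {L : Set (ℝ × ℝ) | IsDoubleTangent γ L}.Finite ∧
  (∀ p v : ℝ × ℝ, v ≠ 0 → 2 ≤ (tangentPts γ p v).ncard → (tangentPts γ p v).ncard = 2) ∧
  (∀ p v : ℝ × ℝ, v ≠ 0 → 2 ≤ (tangentPts γ p v).ncard →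
    ∀ t : ℝ, det2 v (γ.toFun t - p) = 0 → det2 v (deriv γ.toFun t) = 0 →
      curvDet γ t ≠ 0)

/-- `δ(γ)`: the minimal number of double tangents among generic curves
geotopic to `γ`. -/
def delta (γ : PlanarCurve) : ℕ :=
  sInf {k : ℕ | ∃ σ : PlanarCurve, IsGeneric σ ∧ HasGenericTangents σ ∧
    Geotopic γ σ ∧ dTot σ = k}

/-- `I(γ)` where the minimum is taken over curves generic also with respect to
double tangents. -/
def Idt (γ : PlanarCurve) : ℕ :=
  sInf {k : ℕ | ∃ σ : PlanarCurve, IsGeneric σ ∧ HasGenericTangents σ ∧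
    Geotopic γ σ ∧ inflectionCount σ = k}

/-!
A generic curve has finitely many double points, each of which contributes two return times
`d ∈ (0, 1)` with `γ (t + d) = γ t`. Take the shortest one: by minimality `γ` is injective on
`[t, t + d)`, so `γ '' [t, t + d]` is a simple closed curve, and its endpoint `γ t = γ (t + d)` is
a crossing.
-/

def returnTimes (γ : PlanarCurve) : Set ℝ :=
  {d ∈ Ioo (0 : ℝ) 1 | ∃ t, γ.toFun (t + d) = γ.toFun t}

lemma ne_intCast_of_mem_Ioo_zero_one {d : ℝ} (hd : d ∈ Ioo (0 : ℝ) 1) (k : ℤ) : d ≠ k := by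
  rintro rfl
  have h0 : (0 : ℤ) < k := by exact_mod_cast hd.1
  have h1 : k < 1 := by exact_mod_cast hd.2
  omega

lemma isCrossingParam_of_mem_returnTimes {γ : PlanarCurve} {d t : ℝ} (hd : d ∈ Ioo (0 : ℝ) 1)
    (ht : γ.toFun (t + d) = γ.toFun t) :
    IsCrossingParam γ t ∧ IsCrossingParam γ (t + d) :=
  ⟨⟨t + d, ht, fun k h => ne_intCast_of_mem_Ioo_zero_one hd k (by linarith)⟩,
    ⟨t, ht.symm, fun k h => ne_intCast_of_mem_Ioo_zero_one hd (-k) (by push_cast; linarith)⟩⟩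

lemma fract_sub_mem_returnTimes {γ : PlanarCurve} {s t : ℝ} (hst : γ.toFun s = γ.toFun t)
    (hk : ∀ k : ℤ, s ≠ t + k) : Int.fract (s - t) ∈ returnTimes γ := by
  refine ⟨⟨Int.fract_pos.2 fun h => hk ⌊s - t⌋ (by linarith), Int.fract_lt_one _⟩, t, ?_⟩
  have hγs := γ.periodic.sub_int_mul_eq (x := s) ⌊s - t⌋
  rw [mul_one] at hγs
  rw [Int.fract, show t + (s - t - ⌊s - t⌋) = s - ⌊s - t⌋ by ring, hγs, hst]

lemma returnTimes_nonempty {γ : PlanarCurve} (hcr : 0 < crossingCount γ) :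
    (returnTimes γ).Nonempty := by
  obtain ⟨-, t, -, s, hst, hk⟩ := Set.nonempty_of_ncard_ne_zero hcr.ne'
  exact ⟨_, fract_sub_mem_returnTimes hst hk⟩

/-- Since a generic crossing is a double point `γ t₀ = γ s₀`, a return time through it is
`±(s₀ - t₀)` modulo `1`. -/
lemma returnTimes_finite {γ : PlanarCurve} (hγ : IsGeneric γ) : (returnTimes γ).Finite := by
  have hcover : returnTimes γ ⊆ ⋃ p ∈ crossingSet γ,
      {d ∈ Ioo (0 : ℝ) 1 | ∃ t, γ.toFun t = p ∧ γ.toFun (t + d) = p} := by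
    rintro d ⟨hd, t, ht⟩
    exact mem_biUnion ⟨t, rfl, (isCrossingParam_of_mem_returnTimes hd ht).1⟩ ⟨hd, t, rfl, ht⟩
  refine (hγ.1.biUnion fun p hp => ?_).subset hcover
  obtain ⟨t₀, rfl, s₀, hst₀, hk₀⟩ := hp
  refine (toFinite {Int.fract (s₀ - t₀), Int.fract (t₀ - s₀)}).subset ?_
  rintro d ⟨hd, t, ht, htd⟩
  have hnot : ∀ k : ℤ, d ≠ k := ne_intCast_of_mem_Ioo_zero_one hd
  have hfract : d = Int.fract d := (Int.fract_eq_self.2 ⟨hd.1.le, hd.2⟩).symm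
  have hdouble := (hγ.2.1 t₀ s₀ hst₀ hk₀).2
  rcases hdouble t ht with ⟨k₁, e₁⟩ | ⟨k₁, e₁⟩ <;>
    rcases hdouble (t + d) htd with ⟨k₂, e₂⟩ | ⟨k₂, e₂⟩
  · exact absurd (by push_cast; linarith) (hnot (k₂ - k₁))
  · exact Or.inl (hfract.trans (Int.fract_eq_fract.2 ⟨k₂ - k₁, by push_cast; linarith⟩))
  · exact Or.inr (hfract.trans (Int.fract_eq_fract.2 ⟨k₂ - k₁, by push_cast; linarith⟩))
  · exact absurd (by push_cast; linarith) (hnot (k₂ - k₁))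

lemma injOn_Ico_of_le_returnTimes {γ : PlanarCurve} {d : ℝ} (hd1 : d ≤ 1)
    (hmin : ∀ e ∈ returnTimes γ, d ≤ e) (t : ℝ) : InjOn γ.toFun (Ico t (t + d)) := by
  intro u hu v hv huv
  by_contra hne
  wlog hlt : u < v generalizing u v
  · exact this hv hu huv.symm (Ne.symm hne) ((Ne.symm hne).lt_of_le (not_lt.1 hlt))
  have hret : v - u ∈ returnTimes γ :=
    ⟨⟨by linarith, by linarith [hu.1, hv.2]⟩, u, by rw [add_sub_cancel, huv]⟩
  linarith [hmin _ hret, hu.1, hv.2]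

lemma nonempty_homeomorph_circle_image_Icc {X : Type*} [TopologicalSpace X] [T2Space X]
    {f : ℝ → X} {t d : ℝ} (hd : 0 < d) (hf : ContinuousOn f (Icc t (t + d)))
    (hclosed : f t = f (t + d)) (hinj : InjOn f (Ico t (t + d))) :
    Nonempty (f '' Icc t (t + d) ≃ₜ Circle) := by
  have : Fact (0 < d) := ⟨hd⟩
  set G : AddCircle d → X := AddCircle.liftIco d t f
  have hG : G = (Ico t (t + d)).domRestrict f ∘ AddCircle.equivIco d t := rfl
  have hGinj : Function.Injective G := by
    rw [hG]
    exact hinj.injective.comp (AddCircle.equivIco d t).injective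
  have hrange : range G = f '' Icc t (t + d) := by
    rw [hG, range_comp, (AddCircle.equivIco d t).range_eq_univ, image_univ, range_domRestrict,
      ← Ico_union_right (by linarith), image_union, image_singleton, ← hclosed,
      union_eq_left.2 (singleton_subset_iff.2 (mem_image_of_mem f (left_mem_Ico.2 (by linarith))))]
  have hGc : Continuous G := AddCircle.liftIco_continuous hclosed hf
  let e : AddCircle d ≃ₜ range G :=
    hGc.rangeFactorization.homeoOfEquivCompactToT2 (f := Equiv.ofInjective G hGinj)
  exact ⟨(e.trans (Homeomorph.setCongr hrange)).symm.trans (AddCircle.homeomorphCircle hd.ne')⟩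

theorem stmt8 (γ : PlanarCurve) (hγ : IsGeneric γ) (hcr : 0 < crossingCount γ) :
    ∃ a b : ℝ, a < b ∧ b - a < 1 ∧
      IsCrossingParam γ a ∧ IsCrossingParam γ b ∧ γ.toFun a = γ.toFun b ∧
      Nonempty ((γ.toFun '' Icc a b) ≃ₜ Circle) := by
  obtain ⟨d, hd, hmin⟩ :=
    exists_min_image (returnTimes γ) id (returnTimes_finite hγ) (returnTimes_nonempty hcr)
  obtain ⟨⟨hd0, hd1⟩, t, ht⟩ := hd
  obtain ⟨hcross_t, hcross_td⟩ := isCrossingParam_of_mem_returnTimes ⟨hd0, hd1⟩ ht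
  refine ⟨t, t + d, by linarith, by linarith, hcross_t, hcross_td, ht.symm, ?_⟩
  exact nonempty_homeomorph_circle_image_Icc hd0 γ.smooth.continuous.continuousOn ht.symm
    (injOn_Ico_of_le_returnTimes hd1.le hmin t)

end
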